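/- Let Y = (Y_t)_{t≥0} be a real-valued Lévy process (càdlàg paths, Y_0 = 0 a.s., independent and stationary increments) such that Y_t is integrable with E[Y_t] = 0 for every t > 0. Then for every t ≥ 0, E[e^{Y*_t}] ≤ 8·E[e^{|Y_t|}], where Y*_t = sup_{0≤s≤t} |Y_s| and the inequality is understood in [0, ∞]. -/

import Mathlib

open MeasureTheory ProbabilityTheory Filter

noncomputable section

/-- The running supremum `L̄_t = sup_{0 ≤ s ≤ t} L_s` of a process. -/
def supProc {Ω : Type*} (L : ℝ → Ω → ℝ) (t : ℝ) (ω : Ω) : ℝ :=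
  ⨆ s : Set.Icc (0 : ℝ) t, L s.1 ω

/-- The running infimum `L̲_t = inf_{0 ≤ s ≤ t} L_s` of a process. -/
def infProc {Ω : Type*} (L : ℝ → Ω → ℝ) (t : ℝ) (ω : Ω) : ℝ :=
  ⨅ s : Set.Icc (0 : ℝ) t, L s.1 ω

/-- `ᾱ(M) = M|b| + cM²/2 + ∫ |e^{Mx} − 1 − Mx| λ(dx)`. -/
def alphaUp (b c M : ℝ) (ν : Measure ℝ) : ℝ :=
  M * |b| + c * M ^ 2 / 2 + ∫ x : ℝ, |Real.exp (M * x) - 1 - M * x| ∂ν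

/-- `α̲(M) = M|b| + cM²/2 + ∫ |e^{−Mx} − 1 + Mx| λ(dx)`. -/
def alphaDown (b c M : ℝ) (ν : Measure ℝ) : ℝ :=
  M * |b| + c * M ^ 2 / 2 + ∫ x : ℝ, |Real.exp (-M * x) - 1 + M * x| ∂ν

/-- The cumulant generating function `κ(u) = ub + u²c/2 + ∫ (e^{ux} − 1 − ux) λ(dx)`. -/
def kappaFn (b c : ℝ) (ν : Measure ℝ) (u : ℝ) : ℝ :=
  u * b + u ^ 2 * c / 2 + ∫ x : ℝ, (Real.exp (u * x) - 1 - u * x) ∂ν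

/-! On a grid `0 = u₀ ≤ ⋯ ≤ u_N = t` the values `S_k = Y_{u_k}` form a random walk with
independent centred increments, so by Jensen `exp (S_k / 2)` is a nonnegative submartingale, in
the sense of set integrals in `[0, ∞]`. Doob's weak maximal inequality for it, followed by the
layer-cake and Cauchy–Schwarz argument behind Doob's `L²` inequality, gives
`E[exp (max_k S_k)] ≤ 4 E[exp S_N]`; applied to `S` and `-S` this gives the constant `8` for
`max_k |S_k|`. By right-continuity the supremum over `[0, t]` is the increasing limit of maxima
over finite rational grids, and monotone convergence concludes. -/

open ENNReal Set Finset

section MaximalInequality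

variable {Ω : Type*} {mΩ : MeasurableSpace Ω} {μ : Measure Ω}

lemma one_le_lintegral_exp_of_integral_eq_zero [IsProbabilityMeasure μ] {X : Ω → ℝ}
    (hX : Integrable X μ) (hX0 : ∫ ω, X ω ∂μ = 0) :
    1 ≤ ∫⁻ ω, ENNReal.ofReal (Real.exp (X ω)) ∂μ := by
  have hexp_nn : 0 ≤ᵐ[μ] fun ω => Real.exp (X ω) := ae_of_all _ fun _ => (Real.exp_pos _).le
  by_cases hI : Integrable (fun ω => Real.exp (X ω)) μ
  · rw [← ofReal_integral_eq_lintegral_ofReal hI hexp_nn, ← ENNReal.ofReal_one]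
    refine ENNReal.ofReal_le_ofReal ?_
    calc (1 : ℝ) = ∫ ω, (X ω + 1) ∂μ := by simp [integral_add hX (integrable_const 1), hX0]
      _ ≤ _ := integral_mono (hX.add (integrable_const 1)) hI fun ω => Real.add_one_le_exp _
  · rw [not_not.1 (mt (lintegral_ofReal_ne_top_iff_integrable
      (Real.continuous_exp.comp_aestronglyMeasurable hX.1) hexp_nn).1 hI)]
    exact le_top

lemma lintegral_sq_le_two_mul_lintegral_mul_of_weak {f : Ω → ℝ} {W : Ω → ℝ≥0∞} (hf : Measurable f)
    (hf0 : ∀ ω, 0 ≤ f ω) (hW : Measurable W)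
    (hweak : ∀ l : ℝ, 0 < l → ENNReal.ofReal l * μ {ω | l ≤ f ω} ≤ ∫⁻ ω in {ω | l ≤ f ω}, W ω ∂μ) :
    ∫⁻ ω, ENNReal.ofReal (f ω ^ 2) ∂μ ≤ 2 * ∫⁻ ω, W ω * ENNReal.ofReal (f ω) ∂μ := by
  have hlayer := lintegral_rpow_eq_lintegral_meas_le_mul μ (ae_of_all _ hf0) hf.aemeasurable
    two_pos
  norm_num only [Real.rpow_two, Real.rpow_one] at hlayer
  have hdensity := lintegral_withDensity_eq_lintegral_mul μ hW (ENNReal.measurable_ofReal.comp hf)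
  simp only [Pi.mul_apply, Function.comp_apply] at hdensity
  rw [hlayer, ENNReal.ofReal_ofNat, ← hdensity,
    lintegral_eq_lintegral_meas_le _ (ae_of_all _ hf0) hf.aemeasurable]
  gcongr 2 * ?_
  refine lintegral_mono_ae ?_
  filter_upwards [ae_restrict_mem measurableSet_Ioi] with l hl
  rw [mul_comm, withDensity_apply _ (measurableSet_le measurable_const hf)]
  exact hweak l hl

lemma ENNReal.le_sq_mul_of_le_mul_sqrt {a b c : ℝ≥0∞} (ha : a ≠ ⊤)
    (h : a ≤ c * (b ^ (1 / 2 : ℝ) * a ^ (1 / 2 : ℝ))) : a ≤ c ^ 2 * b := by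
  rcases eq_or_ne a 0 with rfl | ha0
  · exact zero_le
  have hsq : ∀ x : ℝ≥0∞, (x ^ (1 / 2 : ℝ)) ^ 2 = x := fun x => by
    rw [← ENNReal.rpow_natCast, ← ENNReal.rpow_mul]; norm_num
  have hroot : a ^ (1 / 2 : ℝ) ≤ c * b ^ (1 / 2 : ℝ) := by
    refine (ENNReal.mul_le_mul_iff_left (c := a ^ (1 / 2 : ℝ)) ?_ ?_).1 ?_
    · simp [ENNReal.rpow_eq_zero_iff, ha0]
    · simp [ENNReal.rpow_eq_top_iff, ha]
    · rw [← sq, hsq, mul_assoc]; exact h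
  calc a = (a ^ (1 / 2 : ℝ)) ^ 2 := (hsq a).symm
    _ ≤ (c * b ^ (1 / 2 : ℝ)) ^ 2 := by gcongr
    _ = c ^ 2 * b := by rw [mul_pow, hsq]

lemma lintegral_sq_le_four_mul_of_weak_of_ne_top {f : Ω → ℝ} {W : Ω → ℝ≥0∞}
    (hf : Measurable f) (hf0 : ∀ ω, 0 ≤ f ω) (hW : Measurable W)
    (hweak : ∀ l : ℝ, 0 < l → ENNReal.ofReal l * μ {ω | l ≤ f ω} ≤ ∫⁻ ω in {ω | l ≤ f ω}, W ω ∂μ)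
    (hfin : ∫⁻ ω, ENNReal.ofReal (f ω ^ 2) ∂μ ≠ ⊤) :
    ∫⁻ ω, ENNReal.ofReal (f ω ^ 2) ∂μ ≤ 4 * ∫⁻ ω, W ω ^ 2 ∂μ := by
  have hCS := ENNReal.lintegral_mul_le_Lp_mul_Lq μ Real.HolderConjugate.two_two hW.aemeasurable
    (ENNReal.measurable_ofReal.comp hf).aemeasurable
  simp only [Pi.mul_apply, Function.comp_apply, ENNReal.rpow_two,
    ← ENNReal.ofReal_pow (hf0 _)] at hCS
  refine (ENNReal.le_sq_mul_of_le_mul_sqrt (b := ∫⁻ ω, W ω ^ 2 ∂μ) (c := 2) hfin ?_).trans_eq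
    (by norm_num)
  exact (lintegral_sq_le_two_mul_lintegral_mul_of_weak hf hf0 hW hweak).trans (by gcongr)

lemma lintegral_sq_le_four_mul_of_weak [IsFiniteMeasure μ] {Z : Ω → ℝ} {W : Ω → ℝ≥0∞}
    (hZ : Measurable Z) (hZ0 : ∀ ω, 0 ≤ Z ω) (hW : Measurable W)
    (hweak : ∀ l : ℝ, 0 < l → ENNReal.ofReal l * μ {ω | l ≤ Z ω} ≤ ∫⁻ ω in {ω | l ≤ Z ω}, W ω ∂μ) :
    ∫⁻ ω, ENNReal.ofReal (Z ω ^ 2) ∂μ ≤ 4 * ∫⁻ ω, W ω ^ 2 ∂μ := by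
  have htrunc_nonneg : ∀ (K : ℕ) ω, 0 ≤ min (Z ω) K := fun K ω => le_min (hZ0 ω) K.cast_nonneg
  have htrunc : ∀ K : ℕ, ∫⁻ ω, ENNReal.ofReal (min (Z ω) K ^ 2) ∂μ ≤ 4 * ∫⁻ ω, W ω ^ 2 ∂μ := by
    intro K
    refine lintegral_sq_le_four_mul_of_weak_of_ne_top (hZ.min measurable_const)
      (htrunc_nonneg K) hW (fun l hl => ?_) ?_
    · by_cases hlK : l ≤ K
      · have hset : {ω | l ≤ min (Z ω) K} = {ω | l ≤ Z ω} := by ext; simp [hlK]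
        rw [hset]
        exact hweak l hl
      · have hset : {ω | l ≤ min (Z ω) K} = ∅ := by ext; simp [hlK]
        rw [hset]
        simp
    · refine ne_top_of_le_ne_top (lintegral_const_lt_top (μ := μ)
        (c := ENNReal.ofReal ((K : ℝ) ^ 2)) ENNReal.ofReal_ne_top).ne
        (lintegral_mono fun ω => ENNReal.ofReal_le_ofReal ?_)
      exact pow_le_pow_left₀ (htrunc_nonneg K ω) (min_le_right _ _) 2
  have hmono : Monotone fun (K : ℕ) ω => ENNReal.ofReal (min (Z ω) K ^ 2) :=
    fun K K' hK ω => ENNReal.ofReal_le_ofReal (pow_le_pow_left₀ (htrunc_nonneg K ω)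
      (min_le_min_left _ (Nat.cast_le.2 hK)) 2)
  have hsup : ∀ ω, ENNReal.ofReal (Z ω ^ 2) = ⨆ K : ℕ, ENNReal.ofReal (min (Z ω) K ^ 2) := by
    intro ω
    obtain ⟨K, hK⟩ := exists_nat_ge (Z ω)
    refine le_antisymm (le_iSup_of_le K (by rw [min_eq_left hK])) (iSup_le fun K' => ?_)
    exact ENNReal.ofReal_le_ofReal (pow_le_pow_left₀ (htrunc_nonneg K' ω) (min_le_left _ _) 2)
  calc ∫⁻ ω, ENNReal.ofReal (Z ω ^ 2) ∂μ
      = ⨆ K : ℕ, ∫⁻ ω, ENNReal.ofReal (min (Z ω) K ^ 2) ∂μ := by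
        simp_rw [hsup]
        exact lintegral_iSup (fun K => ENNReal.measurable_ofReal.comp
          ((hZ.min measurable_const).pow_const 2)) hmono
    _ ≤ 4 * ∫⁻ ω, W ω ^ 2 ∂μ := iSup_le htrunc

lemma le_sup'_range_iff_exists_first {α : Type*} [LinearOrder α] (x : ℕ → α) (n : ℕ) (a : α) :
    a ≤ (range (n + 1)).sup' nonempty_range_add_one x ↔ ∃ k ≤ n, a ≤ x k ∧ ∀ j < k, x j < a := by
  rw [le_sup'_iff]
  constructor
  · rintro ⟨k, hk, hak⟩
    have hex : ∃ k, a ≤ x k := ⟨k, hak⟩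
    exact ⟨Nat.find hex, (Nat.find_min' hex hak).trans (Nat.lt_succ_iff.1 (mem_range.1 hk)),
      Nat.find_spec hex, fun j hj => not_le.1 (Nat.find_min hex hj)⟩
  · rintro ⟨k, hk, hak, -⟩
    exact ⟨k, mem_range.2 (Nat.lt_succ_of_le hk), hak⟩

/-- Doob's maximal inequality in `ℝ≥0∞`: unlike `MeasureTheory.maximal_ineq`, nothing is assumed
integrable, the submartingale property being asked only of set integrals up to time `n`. -/
theorem maximal_ineq_lintegral {ℱ : Filtration ℕ mΩ} {Z : ℕ → Ω → ℝ} (hZ : Adapted ℱ Z) {n : ℕ}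
    (hsub : ∀ k ≤ n, ∀ s, MeasurableSet[ℱ k] s →
      ∫⁻ ω in s, ENNReal.ofReal (Z k ω) ∂μ ≤ ∫⁻ ω in s, ENNReal.ofReal (Z n ω) ∂μ) (ε : ℝ) :
    ENNReal.ofReal ε * μ {ω | ε ≤ (range (n + 1)).sup' nonempty_range_add_one fun k => Z k ω} ≤
      ∫⁻ ω in {ω | ε ≤ (range (n + 1)).sup' nonempty_range_add_one fun k => Z k ω},
        ENNReal.ofReal (Z n ω) ∂μ := by
  set A : ℕ → Set Ω := fun k => {ω | ε ≤ Z k ω} ∩ ⋂ j < k, {ω | Z j ω < ε}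
  have hA : ∀ k, MeasurableSet[ℱ k] (A k) := fun k =>
    (measurableSet_le measurable_const (hZ k)).inter <| MeasurableSet.iInter fun j =>
      MeasurableSet.iInter fun hj => measurableSet_lt ((hZ j).mono (ℱ.mono hj.le) le_rfl)
        measurable_const
  have hA' : ∀ k ∈ Finset.range (n + 1), MeasurableSet (A k) := fun k _ => ℱ.le k _ (hA k)
  have hdisj : (↑(Finset.range (n + 1)) : Set ℕ).PairwiseDisjoint A := by
    have hfirst : ∀ k k', k < k' → Disjoint (A k) (A k') := fun k k' h =>
      Set.disjoint_left.2 fun ω hk hk' =>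
      (show Z k ω < ε from mem_iInter₂.1 hk'.2 k h).not_ge hk.1
    intro k _ k' _ hkk'
    rcases hkk'.lt_or_gt with h | h
    exacts [hfirst k k' h, (hfirst k' k h).symm]
  have hunion : {ω | ε ≤ (Finset.range (n + 1)).sup' nonempty_range_add_one fun k => Z k ω} =
      ⋃ k ∈ Finset.range (n + 1), A k := by
    ext ω
    rw [Set.mem_ofPred_eq, le_sup'_range_iff_exists_first]
    simp only [A, mem_iUnion, mem_inter_iff, mem_iInter, Finset.mem_range, Nat.lt_succ_iff,
      exists_prop]
    rfl
  rw [hunion, measure_biUnion_finset hdisj hA', lintegral_biUnion_finset hdisj hA', mul_sum]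
  refine sum_le_sum fun k hk => ?_
  calc ENNReal.ofReal ε * μ (A k) = ∫⁻ ω in A k, ENNReal.ofReal ε ∂μ :=
        (setLIntegral_const _ _).symm
    _ ≤ ∫⁻ ω in A k, ENNReal.ofReal (Z k ω) ∂μ :=
      setLIntegral_mono' (hA' k hk) fun ω hω => ENNReal.ofReal_le_ofReal hω.1
    _ ≤ _ := hsub k (Nat.lt_succ_iff.1 (mem_range.1 hk)) _ (hA k)

lemma setLIntegral_le_setLIntegral_mul_of_indep {m₁ m₂ : MeasurableSpace Ω} (hm₁ : m₁ ≤ mΩ)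
    (hm₂ : m₂ ≤ mΩ) (hind : Indep m₁ m₂ μ) {f g : Ω → ℝ≥0∞} (hf : Measurable[m₁] f)
    (hg : Measurable[m₂] g) (hg1 : 1 ≤ ∫⁻ ω, g ω ∂μ) {s : Set Ω} (hs : MeasurableSet[m₁] s) :
    ∫⁻ ω in s, f ω ∂μ ≤ ∫⁻ ω in s, f ω * g ω ∂μ := by
  rw [← lintegral_indicator (hm₁ _ hs), ← lintegral_indicator (hm₁ _ hs)]
  calc ∫⁻ ω, s.indicator f ω ∂μ ≤ (∫⁻ ω, s.indicator f ω ∂μ) * ∫⁻ ω, g ω ∂μ :=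
        le_mul_of_one_le_right' hg1
    _ = ∫⁻ ω, s.indicator f ω * g ω ∂μ :=
        (lintegral_mul_eq_lintegral_mul_lintegral_of_independent_measurableSpace hm₁ hm₂ hind
          (hf.indicator hs) hg).symm
    _ = ∫⁻ ω, s.indicator (fun ω => f ω * g ω) ω ∂μ := by
        congr with ω
        by_cases h : ω ∈ s <;> simp [h]

lemma indep_iSup_comap_sum_range_comap_sum_Ico {D : ℕ → Ω → ℝ} (hD : ∀ m, Measurable (D m))
    {k n : ℕ} (hkn : k ≤ n) (hind : iIndepFun (fun m : Fin n => D m) μ) :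
    Indep (⨆ j ≤ k, MeasurableSpace.comap (fun ω => ∑ m ∈ Finset.range j, D m ω) inferInstance)
      (MeasurableSpace.comap (fun ω => ∑ m ∈ Finset.Ico k n, D m ω) inferInstance) μ := by
  rw [iIndepFun_iff_iIndep] at hind
  have hblocks := indep_iSup_of_disjoint (fun m : Fin n => (hD m).comap_le) hind
    (S := {m : Fin n | (m : ℕ) < k}) (T := {m | k ≤ (m : ℕ)})
    (Set.disjoint_left.2 fun m (h₁ : (m : ℕ) < k) (h₂ : k ≤ (m : ℕ)) => (not_le.2 h₁) h₂)
  have hmeas_block : ∀ (T : Set (Fin n)) (m : Fin n), m ∈ T →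
      Measurable[⨆ i ∈ T, MeasurableSpace.comap (D i) inferInstance] (D m) := fun T m hm =>
    (comap_measurable (D m)).mono
      (le_iSup₂ (f := fun (i : Fin n) (_ : i ∈ T) => MeasurableSpace.comap (D i) _) m hm) le_rfl
  refine indep_of_indep_of_le_right (indep_of_indep_of_le_left hblocks ?_) ?_
  · refine iSup₂_le fun j hj => Measurable.comap_le ?_
    exact Finset.measurable_sum _ fun m hm =>
      hmeas_block _ ⟨m, by simp at hm; omega⟩ (by simp at hm ⊢; omega)
  · refine Measurable.comap_le ?_
    exact Finset.measurable_sum _ fun m hm =>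
      hmeas_block _ ⟨m, by simp at hm; omega⟩ (by simp at hm ⊢; omega)

theorem lintegral_exp_sup'_sum_range_le [IsProbabilityMeasure μ] {D : ℕ → Ω → ℝ}
    (hD : ∀ m, Measurable (D m)) {n : ℕ} (hind : iIndepFun (fun m : Fin n => D m) μ)
    (hint : ∀ m < n, Integrable (D m) μ) (hmean : ∀ m < n, ∫ ω, D m ω ∂μ = 0) :
    ∫⁻ ω, ENNReal.ofReal (Real.exp ((Finset.range (n + 1)).sup' nonempty_range_add_one
        fun k => ∑ m ∈ Finset.range k, D m ω)) ∂μ ≤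
      4 * ∫⁻ ω, ENNReal.ofReal (Real.exp (∑ m ∈ Finset.range n, D m ω)) ∂μ := by
  set S : ℕ → Ω → ℝ := fun k ω => ∑ m ∈ Finset.range k, D m ω with hS_def
  have hS : ∀ k, Measurable (S k) := fun k => Finset.measurable_sum _ fun m _ => hD m
  set ℱ := Filtration.natural S fun k => (hS k).stronglyMeasurable
  set Z : ℕ → Ω → ℝ := fun k ω => Real.exp (S k ω / 2) with hZ_def
  have hZ : Adapted ℱ Z := fun k =>
    Real.measurable_exp.comp
      ((Filtration.stronglyAdapted_natural (u := S) _ k).measurable.div_const 2)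
  have hsub : ∀ k ≤ n, ∀ s, MeasurableSet[ℱ k] s →
      ∫⁻ ω in s, ENNReal.ofReal (Z k ω) ∂μ ≤ ∫⁻ ω in s, ENNReal.ofReal (Z n ω) ∂μ := by
    intro k hk s hs
    have hsplit : ∀ ω, ENNReal.ofReal (Z n ω) =
        ENNReal.ofReal (Z k ω) *
          ENNReal.ofReal (Real.exp ((∑ m ∈ Finset.Ico k n, D m ω) / 2)) := by
      intro ω
      rw [← ENNReal.ofReal_mul (Real.exp_pos _).le, ← Real.exp_add, ← add_div]
      simp only [hZ_def, hS_def, sum_range_add_sum_Ico _ hk]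
    have hmean_Ico : ∫ ω, (∑ m ∈ Finset.Ico k n, D m ω) / 2 ∂μ = 0 := by
      rw [integral_div, integral_finsetSum _ fun m hm => hint m (mem_Ico.1 hm).2,
        sum_eq_zero fun m hm => hmean m (mem_Ico.1 hm).2, zero_div]
    simp_rw [hsplit]
    refine setLIntegral_le_setLIntegral_mul_of_indep (ℱ.le k) (Measurable.comap_le ?_)
      (indep_iSup_comap_sum_range_comap_sum_Ico hD hk hind) (hZ k).ennreal_ofReal ?_
      (one_le_lintegral_exp_of_integral_eq_zero
        ((integrable_finsetSum _ fun m hm => hint m (mem_Ico.1 hm).2).div_const 2) hmean_Ico) hs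
    · exact Finset.measurable_sum _ fun m _ => hD m
    · exact (Real.measurable_exp.comp ((comap_measurable _).div_const 2)).ennreal_ofReal
  have hsupZ : ∀ ω, (Finset.range (n + 1)).sup' nonempty_range_add_one
      (fun k => Real.exp (S k ω / 2)) =
      Real.exp ((Finset.range (n + 1)).sup' nonempty_range_add_one (fun k => S k ω) / 2) :=
    fun ω => (apply_sup'_eq_sup'_comp _ (fun x => Real.exp (x / 2)) fun x y =>
      ((Real.exp_monotone.comp fun _ _ h => div_le_div_of_nonneg_right h two_pos.le).map_max)).symm
  have hdoob := lintegral_sq_le_four_mul_of_weak (μ := μ)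
    (Z := fun ω => (Finset.range (n + 1)).sup' nonempty_range_add_one fun k => Z k ω)
    (W := fun ω => ENNReal.ofReal (Z n ω))
    (Finset.measurable_range_sup'' fun k _ => (hZ k).mono (ℱ.le k) le_rfl)
    (fun ω => by rw [hsupZ]; positivity) (hZ n |>.mono (ℱ.le n) le_rfl).ennreal_ofReal
    (fun l _ => maximal_ineq_lintegral hZ hsub l)
  have hsq : ∀ x : ℝ, Real.exp (x / 2) ^ 2 = Real.exp x := fun x => by
    rw [← Real.exp_nat_mul]; ring_nf
  simp only [hZ_def, hsupZ, hsq, ← ENNReal.ofReal_pow (Real.exp_pos _).le] at hdoob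
  exact hdoob

theorem lintegral_exp_sup'_abs_sum_range_le [IsProbabilityMeasure μ] {D : ℕ → Ω → ℝ}
    (hD : ∀ m, Measurable (D m)) {n : ℕ} (hind : iIndepFun (fun m : Fin n => D m) μ)
    (hint : ∀ m < n, Integrable (D m) μ) (hmean : ∀ m < n, ∫ ω, D m ω ∂μ = 0) :
    ∫⁻ ω, ENNReal.ofReal (Real.exp ((Finset.range (n + 1)).sup' nonempty_range_add_one
        fun k => |∑ m ∈ Finset.range k, D m ω|)) ∂μ ≤
      8 * ∫⁻ ω, ENNReal.ofReal (Real.exp |∑ m ∈ Finset.range n, D m ω|) ∂μ := by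
  set S : ℕ → Ω → ℝ := fun k ω => ∑ m ∈ Finset.range k, D m ω
  have hup := lintegral_exp_sup'_sum_range_le hD hind hint hmean
  have hdown := lintegral_exp_sup'_sum_range_le (D := fun m ω => -D m ω) (fun m => (hD m).neg)
    (hind.comp _ fun _ => measurable_neg) (fun m hm => (hint m hm).neg)
    (fun m hm => by rw [integral_neg, hmean m hm, neg_zero])
  simp only [sum_neg_distrib] at hdown
  have hexp_le : ∀ {a b : ℝ}, a ≤ b → ENNReal.ofReal (Real.exp a) ≤ ENNReal.ofReal (Real.exp b) :=
    fun h => ENNReal.ofReal_le_ofReal (Real.exp_le_exp.2 h)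
  have hsplit : ∀ ω, ENNReal.ofReal (Real.exp ((Finset.range (n + 1)).sup' nonempty_range_add_one
      fun k => |S k ω|)) ≤
      ENNReal.ofReal (Real.exp ((Finset.range (n + 1)).sup' nonempty_range_add_one
        fun k => S k ω)) +
      ENNReal.ofReal (Real.exp ((Finset.range (n + 1)).sup' nonempty_range_add_one
        fun k => -S k ω)) := by
    intro ω
    obtain ⟨k, hk, hmax⟩ := exists_mem_eq_sup' nonempty_range_add_one fun k => |S k ω|
    rw [hmax]
    rcases abs_choice (S k ω) with habs | habs <;> rw [habs]
    · exact le_add_right (hexp_le (le_sup' (fun k => S k ω) hk))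
    · exact le_add_left (hexp_le (le_sup' (fun k => -S k ω) hk))
  calc _ ≤ _ := lintegral_mono hsplit
    _ = _ := lintegral_add_left ((Finset.measurable_range_sup'' fun k _ =>
          Finset.measurable_sum _ fun m _ => hD m).exp.ennreal_ofReal) _
    _ ≤ 4 * ∫⁻ ω, ENNReal.ofReal (Real.exp (S n ω)) ∂μ +
        4 * ∫⁻ ω, ENNReal.ofReal (Real.exp (-S n ω)) ∂μ := add_le_add hup hdown
    _ ≤ 4 * ∫⁻ ω, ENNReal.ofReal (Real.exp |S n ω|) ∂μ +
        4 * ∫⁻ ω, ENNReal.ofReal (Real.exp |S n ω|) ∂μ := by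
      gcongr with ω ω
      exacts [le_abs_self _, neg_le_abs _]
    _ = _ := by ring

end MaximalInequality

lemma Finset.exists_monotone_image_range_eq {α : Type*} [LinearOrder α] [DecidableEq α]
    (F : Finset α) (hF : F.Nonempty) : ∃ (N : ℕ) (u : ℕ → α), Monotone u ∧ u 0 = F.min' hF ∧
      u N = F.max' hF ∧ (Finset.range (N + 1)).image u = F := by
  have hcard : 0 < F.card := card_pos.2 hF
  set e := F.orderEmbOfFin rfl
  refine ⟨F.card - 1, fun j => e ⟨min j (F.card - 1), by omega⟩, fun a b hab =>
    e.monotone (Fin.mk_le_mk.2 (min_le_min_right _ hab)), ?_, ?_, ?_⟩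
  · simp only [Nat.zero_min]
    exact orderEmbOfFin_zero rfl hcard
  · simp only [min_self]
    exact orderEmbOfFin_last rfl hcard
  · ext x
    simp only [mem_image, Finset.mem_range]
    constructor
    · rintro ⟨j, -, rfl⟩
      exact orderEmbOfFin_mem F rfl _
    · intro hx
      obtain ⟨⟨j, hj⟩, rfl⟩ : x ∈ Set.range e := by rw [range_orderEmbOfFin]; exact hx
      exact ⟨j, by omega, by simp only [e]; congr; omega⟩

section LevyProcess

variable {Ω : Type*} [MeasurableSpace Ω] {P : Measure Ω} [IsProbabilityMeasure P]
  {Y : ℝ → Ω → ℝ}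

lemma lintegral_exp_finset_sup'_abs_le (hmeas : ∀ t : ℝ, Measurable (Y t))
    (h0 : ∀ᵐ ω ∂P, Y 0 ω = 0)
    (hindep : ∀ (n : ℕ) (τ : Fin (n + 1) → ℝ), Monotone τ → 0 ≤ τ 0 →
      iIndepFun (fun i : Fin n => fun ω => Y (τ i.succ) ω - Y (τ i.castSucc) ω) P)
    (hint : ∀ t : ℝ, 0 < t → Integrable (Y t) P) (hmean : ∀ t : ℝ, 0 < t → ∫ ω, Y t ω ∂P = 0)
    {t : ℝ} {F : Finset ℝ} (hF : ∀ s ∈ F, s ∈ Icc 0 t) (h0F : 0 ∈ F) (htF : t ∈ F) :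
    ∫⁻ ω, ENNReal.ofReal (Real.exp (F.sup' ⟨0, h0F⟩ fun s => |Y s ω|)) ∂P ≤
      8 * ∫⁻ ω, ENNReal.ofReal (Real.exp |Y t ω|) ∂P := by
  obtain ⟨N, u, hu, hu0, huN, himage⟩ := F.exists_monotone_image_range_eq ⟨0, h0F⟩
  rw [le_antisymm (min'_le _ _ h0F) (le_min' _ _ _ fun s hs => (hF s hs).1)] at hu0
  rw [le_antisymm (max'_le _ _ _ fun s hs => (hF s hs).2) (le_max' _ _ htF)] at huN
  subst himage
  have hu_nonneg : ∀ m, 0 ≤ u m := fun m => hu0 ▸ hu (Nat.zero_le m)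
  have hcentered : ∀ s, 0 ≤ s → Integrable (Y s) P ∧ ∫ ω, Y s ω ∂P = 0 := by
    intro s hs
    rcases hs.eq_or_lt with rfl | hs
    · exact ⟨(integrable_zero Ω ℝ P).congr (h0.mono fun ω h => h.symm),
        by rw [integral_congr_ae h0]; simp⟩
    · exact ⟨hint s hs, hmean s hs⟩
  set D : ℕ → Ω → ℝ := fun m ω => Y (u (m + 1)) ω - Y (u m) ω
  have hwalk := lintegral_exp_sup'_abs_sum_range_le (μ := P) (D := D) (n := N)
    (fun m => (hmeas _).sub (hmeas _))
    (hindep N (fun j => u j) (fun a b h => hu h) (hu_nonneg 0))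
    (fun m _ => (hcentered _ (hu_nonneg _)).1.sub (hcentered _ (hu_nonneg _)).1)
    (fun m _ => by
      rw [integral_sub (hcentered _ (hu_nonneg _)).1 (hcentered _ (hu_nonneg _)).1,
        (hcentered _ (hu_nonneg _)).2, (hcentered _ (hu_nonneg _)).2, sub_zero])
  have htelescope : ∀ᵐ ω ∂P, ∀ k, ∑ m ∈ Finset.range k, D m ω = Y (u k) ω := by
    filter_upwards [h0] with ω hω k
    rw [sum_range_sub (fun m => Y (u m) ω), hu0, hω, sub_zero]
  calc _ = ∫⁻ ω, ENNReal.ofReal (Real.exp ((Finset.range (N + 1)).sup' nonempty_range_add_one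
          fun k => |∑ m ∈ Finset.range k, D m ω|)) ∂P :=
        lintegral_congr_ae (htelescope.mono fun ω h => by
          simp only [h]
          exact congrArg (fun x => ENNReal.ofReal (Real.exp x)) (sup'_image _ _))
    _ ≤ _ := hwalk
    _ = _ := by
      rw [lintegral_congr_ae (htelescope.mono fun ω h => by rw [h N, huN])]

end LevyProcess

section RationalGrid

lemma ENNReal.ofReal_exp_iSup_le {ι : Sort*} [Nonempty ι] {a : ι → ℝ} (ha : ∀ i, 0 ≤ a i) :
    ENNReal.ofReal (Real.exp (⨆ i, a i)) ≤ ⨆ i, ENNReal.ofReal (Real.exp (a i)) := by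
  by_cases hbdd : BddAbove (Set.range a)
  · exact (Monotone.map_ciSup_of_continuousAt
      (ENNReal.continuous_ofReal.comp Real.continuous_exp).continuousAt
      (ENNReal.ofReal_mono.comp Real.exp_monotone) hbdd).le
  · rw [Real.iSup_of_not_bddAbove hbdd, Real.exp_zero, ENNReal.ofReal_one]
    obtain ⟨i⟩ := ‹Nonempty ι›
    exact le_iSup_of_le i (ENNReal.one_le_ofReal.2 (Real.one_le_exp (ha i)))

lemma le_of_continuousWithinAt_Ici_of_forall_rat_le {α : Type*} [TopologicalSpace α]
    [Preorder α] [ClosedIicTopology α] {g : ℝ → α} {s t : ℝ} {a : α} (hst : s < t)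
    (hg : ContinuousWithinAt g (Ici s) s) (h : ∀ q : ℚ, (q : ℝ) ∈ Ioo s t → g q ≤ a) :
    g s ≤ a := by
  have hs : s ∈ closure (Ioo s t ∩ range ((↑) : ℚ → ℝ)) :=
    closure_minimal (Rat.denseRange_cast.open_subset_closure_inter isOpen_Ioo) isClosed_closure
      (by rw [closure_Ioo hst.ne]; exact left_mem_Icc.2 hst.le)
  have hmaps : MapsTo g (Ioo s t ∩ range ((↑) : ℚ → ℝ)) (Iic a) := by
    rintro _ ⟨hq, q, rfl⟩
    exact h q hq
  simpa [isClosed_Iic.closure_eq] using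
    (hg.mono (inter_subset_left.trans (Set.Ioo_subset_Ioi_self.trans Set.Ioi_subset_Ici_self))
      ).mem_closure hs hmaps

def ratGrid (t : ℝ) (G : Finset ℚ) : Finset ℝ :=
  insert 0 (insert t ((G.image ((↑) : ℚ → ℝ)).filter (· ∈ Icc 0 t)))

lemma zero_mem_ratGrid (t : ℝ) (G : Finset ℚ) : 0 ∈ ratGrid t G := mem_insert_self _ _

lemma ratGrid_nonempty (t : ℝ) (G : Finset ℚ) : (ratGrid t G).Nonempty :=
  ⟨0, zero_mem_ratGrid t G⟩

lemma mem_ratGrid_self (t : ℝ) (G : Finset ℚ) : t ∈ ratGrid t G :=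
  mem_insert_of_mem (mem_insert_self _ _)

lemma mem_Icc_of_mem_ratGrid {t : ℝ} (ht : 0 ≤ t) {G : Finset ℚ} {s : ℝ}
    (hs : s ∈ ratGrid t G) : s ∈ Icc 0 t := by
  simp only [ratGrid, Finset.mem_insert, Finset.mem_filter] at hs
  rcases hs with rfl | rfl | ⟨-, hs⟩
  exacts [⟨le_rfl, ht⟩, ⟨ht, le_rfl⟩, hs]

lemma ratGrid_mono (t : ℝ) : Monotone (ratGrid t) := fun _ _ hG =>
  insert_subset_insert _ (insert_subset_insert _ (filter_subset_filter _ (image_subset_image hG)))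

lemma ofReal_exp_iSup_abs_le_iSup_ratGrid {f : ℝ → ℝ} {t : ℝ} (ht : 0 ≤ t)
    (hf : ∀ s, 0 ≤ s → ContinuousWithinAt f (Ici s) s) :
    ENNReal.ofReal (Real.exp (⨆ s : Icc 0 t, |f s|)) ≤
      ⨆ G : Finset ℚ, ENNReal.ofReal (Real.exp
        ((ratGrid t G).sup' (ratGrid_nonempty t G) fun s => |f s|)) := by
  set g : ℝ → ℝ≥0∞ := fun s => ENNReal.ofReal (Real.exp |f s|)
  set R := ⨆ G : Finset ℚ, ENNReal.ofReal (Real.exp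
      ((ratGrid t G).sup' (ratGrid_nonempty t G) fun s => |f s|))
  have hgrid : ∀ G, ∀ s ∈ ratGrid t G, g s ≤ R := fun G s hs =>
    le_iSup_of_le G (ENNReal.ofReal_le_ofReal (Real.exp_le_exp.2
      (le_sup' (fun s => |f s|) hs)))
  have hIcc : ∀ s ∈ Icc 0 t, g s ≤ R := by
    intro s hs
    rcases hs.2.eq_or_lt with rfl | hst
    · exact hgrid ∅ s (mem_ratGrid_self s ∅)
    refine le_of_continuousWithinAt_Ici_of_forall_rat_le hst ?_ fun q hq => hgrid {q} q ?_
    · exact (ENNReal.continuous_ofReal.comp (Real.continuous_exp.comp continuous_abs))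
        |>.continuousAt.comp_continuousWithinAt (hf s hs.1)
    · exact mem_insert_of_mem (mem_insert_of_mem (mem_filter.2
        ⟨mem_image_of_mem _ (mem_singleton_self q), hs.1.trans hq.1.le, hq.2.le⟩))
  have : Nonempty (Icc 0 t) := ⟨⟨0, le_rfl, ht⟩⟩
  exact (ENNReal.ofReal_exp_iSup_le fun s => abs_nonneg _).trans (iSup_le fun s => hIcc s s.2)

end RationalGrid

theorem stmt_1_general
    {Ω : Type*} [MeasurableSpace Ω] (P : Measure Ω) [IsProbabilityMeasure P]
    (Y : ℝ → Ω → ℝ)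
    (hmeas : ∀ t : ℝ, Measurable (Y t))
    (hrc : ∀ ω : Ω, ∀ t : ℝ, 0 ≤ t → ContinuousWithinAt (fun s => Y s ω) (Set.Ici t) t)
    (h0 : ∀ᵐ ω ∂P, Y 0 ω = 0)
    (hindep : ∀ (n : ℕ) (τ : Fin (n + 1) → ℝ), Monotone τ → 0 ≤ τ 0 →
      iIndepFun
        (fun i : Fin n => fun ω => Y (τ i.succ) ω - Y (τ i.castSucc) ω) P)
    (hint : ∀ t : ℝ, 0 < t → Integrable (Y t) P)
    (hmean : ∀ t : ℝ, 0 < t → ∫ ω, Y t ω ∂P = 0) :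
    ∀ t : ℝ, 0 ≤ t →
      (∫⁻ ω, ENNReal.ofReal (Real.exp (⨆ s : Set.Icc (0 : ℝ) t, |Y s.1 ω|)) ∂P) ≤
        8 * ∫⁻ ω, ENNReal.ofReal (Real.exp |Y t ω|) ∂P := by
  intro t ht
  set M : Finset ℚ → Ω → ℝ≥0∞ := fun G ω => ENNReal.ofReal (Real.exp
    ((ratGrid t G).sup' (ratGrid_nonempty t G) fun s => |Y s ω|))
  have hM : ∀ G, Measurable (M G) := fun G => by
    simpa only [Finset.sup'_apply] using
      (Finset.measurable_sup' (ratGrid_nonempty t G) fun s _ => (hmeas s).abs).exp.ennreal_ofReal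
  have hM_mono : Monotone M := fun G G' hG ω => ENNReal.ofReal_le_ofReal <| Real.exp_le_exp.2 <|
    sup'_mono _ (ratGrid_mono t hG) _
  calc _ ≤ ∫⁻ ω, ⨆ G, M G ω ∂P :=
        lintegral_mono fun ω => ofReal_exp_iSup_abs_le_iSup_ratGrid ht (hrc ω)
    _ = ⨆ G, ∫⁻ ω, M G ω ∂P := lintegral_iSup_directed (fun G => (hM G).aemeasurable)
        hM_mono.directed_le
    _ ≤ _ := iSup_le fun G => lintegral_exp_finset_sup'_abs_le hmeas h0 hindep hint hmean
        (fun s => mem_Icc_of_mem_ratGrid ht) (zero_mem_ratGrid t G) (mem_ratGrid_self t G)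

theorem stmt_1
    {Ω : Type*} [MeasurableSpace Ω] (P : Measure Ω) [IsProbabilityMeasure P]
    (Y : ℝ → Ω → ℝ)
    (hmeas : ∀ t : ℝ, Measurable (Y t))
    (hrc : ∀ ω : Ω, ∀ t : ℝ, 0 ≤ t → ContinuousWithinAt (fun s => Y s ω) (Set.Ici t) t)
    (hll : ∀ ω : Ω, ∀ t : ℝ, 0 < t →
      ∃ l : ℝ, Tendsto (fun s => Y s ω) (nhdsWithin t (Set.Iio t)) (nhds l))
    (h0 : ∀ᵐ ω ∂P, Y 0 ω = 0)
    (hstat : ∀ s t : ℝ, 0 ≤ s → s ≤ t →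
      Measure.map (fun ω => Y t ω - Y s ω) P = Measure.map (Y (t - s)) P)
    (hindep : ∀ (n : ℕ) (τ : Fin (n + 1) → ℝ), Monotone τ → 0 ≤ τ 0 →
      iIndepFun
        (fun i : Fin n => fun ω => Y (τ i.succ) ω - Y (τ i.castSucc) ω) P)
    (hint : ∀ t : ℝ, 0 < t → Integrable (Y t) P)
    (hmean : ∀ t : ℝ, 0 < t → ∫ ω, Y t ω ∂P = 0) :
    ∀ t : ℝ, 0 ≤ t →
      (∫⁻ ω, ENNReal.ofReal (Real.exp (⨆ s : Set.Icc (0 : ℝ) t, |Y s.1 ω|)) ∂P) ≤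
        8 * ∫⁻ ω, ENNReal.ofReal (Real.exp |Y t ω|) ∂P :=
  stmt_1_general P Y hmeas hrc h0 hindep hint hmean
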